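/- For every k ≥ 0 and all agents l, m, n ∈ Agt, the general permutation schema (GPerm_k), namely ⟨l⟩⟨m⟩φ → ⟨n⟩⋀_{i ≤ k, i ≠ n}⟨i⟩φ, is valid in BT+AC structures: every instance is true at every index w/h of every BT+AC model. -/

import Mathlib

/-! Common infrastructure for STIT logic (Chellas STIT, deliberative STIT,
historic necessity), following Balbiani, Herzig & Troquard,
"Alternative axiomatics and complexity of deliberative STIT theories". -/

namespace STIT

/-- Formulas of the (combined) STIT language, over a countable set of atoms
(indexed by `ℕ`) and agents indexed by `ℕ` (the actual agent set `Agt` is an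
initial segment of `ℕ`).  `cstit i` is the Chellas STIT operator `[i]`,
`dstit i` is the deliberative STIT operator `[i dstit: ·]`, and `box` is the
historic necessity operator `□`. -/
inductive Fml : Type
  | atm : ℕ → Fml
  | neg : Fml → Fml
  | and : Fml → Fml → Fml
  | cstit : ℕ → Fml → Fml
  | dstit : ℕ → Fml → Fml
  | box : Fml → Fml
  deriving DecidableEq

/-- Material implication `φ → ψ`, as the abbreviation `¬(φ ∧ ¬ψ)`. -/
def impF (φ ψ : Fml) : Fml := .neg (.and φ (.neg ψ))

/-- Disjunction `φ ∨ ψ`, as the abbreviation `¬(¬φ ∧ ¬ψ)`. -/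
def orF (φ ψ : Fml) : Fml := .neg (.and (.neg φ) (.neg ψ))

/-- Biimplication `φ ↔ ψ`, as the abbreviation `(φ → ψ) ∧ (ψ → φ)`. -/
def iffF (φ ψ : Fml) : Fml := .and (impF φ ψ) (impF ψ φ)

/-- `◇φ`, abbreviating `¬□¬φ`. -/
def diaF (φ : Fml) : Fml := .neg (.box (.neg φ))

/-- `⟨i⟩φ`, abbreviating `¬[i]¬φ`. -/
def posF (i : ℕ) (φ : Fml) : Fml := .neg (.cstit i (.neg φ))

/-- Conjunction of a (finite) list of formulas; the empty conjunction is a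
tautology `⊤`. -/
def conjF : List Fml → Fml
  | [] => impF (.atm 0) (.atm 0)
  | [φ] => φ
  | φ :: l => .and φ (conjF l)

/-- The length `‖φ‖` of a formula. -/
def len : Fml → ℕ
  | .atm _ => 1
  | .neg φ => 1 + len φ
  | .and φ ψ => 3 + len φ + len ψ
  | .cstit _ φ => 3 + len φ
  | .dstit _ φ => 5 + len φ
  | .box φ => 1 + len φ

/-- The set `sf φ` of subformulas of `φ`. -/
def sf : Fml → Finset Fml
  | .atm p => {.atm p}
  | .neg φ => insert (.neg φ) (sf φ)
  | .and φ ψ => insert (.and φ ψ) (sf φ ∪ sf ψ)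
  | .cstit i φ => insert (.cstit i φ) (sf φ)
  | .dstit i φ => insert (.dstit i φ) (sf φ)
  | .box φ => insert (.box φ) (sf φ)

/-- The set of atoms occurring in a formula. -/
def atoms : Fml → Finset ℕ
  | .atm p => {p}
  | .neg φ => atoms φ
  | .and φ ψ => atoms φ ∪ atoms ψ
  | .cstit _ φ => atoms φ
  | .dstit _ φ => atoms φ
  | .box φ => atoms φ

/-- `φ` contains no deliberative STIT operator (so `φ` belongs to `L_CSTIT`
when it moreover only uses box/cstit). -/
def NoDstit : Fml → Prop
  | .atm _ => True
  | .neg φ => NoDstit φ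
  | .and φ ψ => NoDstit φ ∧ NoDstit ψ
  | .cstit _ φ => NoDstit φ
  | .dstit _ _ => False
  | .box φ => NoDstit φ

/-- `φ` contains no Chellas STIT operator (so `φ` belongs to `L_DSTIT`). -/
def NoCstit : Fml → Prop
  | .atm _ => True
  | .neg φ => NoCstit φ
  | .and φ ψ => NoCstit φ ∧ NoCstit ψ
  | .cstit _ _ => False
  | .dstit _ φ => NoCstit φ
  | .box φ => NoCstit φ

/-- `φ` contains no historic necessity operator. -/
def NoBox : Fml → Prop
  | .atm _ => True
  | .neg φ => NoBox φ
  | .and φ ψ => NoBox φ ∧ NoBox ψ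
  | .cstit _ φ => NoBox φ
  | .dstit _ φ => NoBox φ
  | .box _ => False

/-- All agents occurring in `φ` belong to `A`. -/
def AgentsIn (A : Set ℕ) : Fml → Prop
  | .atm _ => True
  | .neg φ => AgentsIn A φ
  | .and φ ψ => AgentsIn A φ ∧ AgentsIn A ψ
  | .cstit i φ => i ∈ A ∧ AgentsIn A φ
  | .dstit i φ => i ∈ A ∧ AgentsIn A φ
  | .box φ => AgentsIn A φ

/-- `A` is an initial segment `{0, 1, …}` of `ℕ`. -/
def InitSeg (A : Set ℕ) : Prop := ∀ i ∈ A, ∀ j : ℕ, j ≤ i → j ∈ A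

/-- A BT+AC model over the agent set `Agt`: a nonempty tree-like strict
order of moments, together with a choice function and a valuation.
Histories are represented as maximal chains (maximal linearly `<`-ordered
subsets) of moments; `Choice i w` is, for each agent `i ∈ Agt`, a partition
of the set `H_w` of histories passing through `w` into nonempty cells,
satisfying the superadditivity constraint (independence of agents). -/
structure BTAC (Agt : Set ℕ) where
  W : Type
  neW : Nonempty W
  lt : W → W → Prop
  lt_irrefl : ∀ w : W, ¬ lt w w
  lt_trans : ∀ {a b c : W}, lt a b → lt b c → lt a c
  treelike : ∀ w₁ w₂ w₃ : W, lt w₁ w₃ → lt w₂ w₃ → w₁ = w₂ ∨ lt w₁ w₂ ∨ lt w₂ w₁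
  Choice : ℕ → W → Set (Set (Set W))
  V : ℕ → W → Set W → Prop
  choice_hist : ∀ i ∈ Agt, ∀ w : W, ∀ Q ∈ Choice i w, ∀ h ∈ Q,
      IsMaxChain lt h ∧ w ∈ h
  choice_cell_nonempty : ∀ i ∈ Agt, ∀ w : W, ∀ Q ∈ Choice i w, Q.Nonempty
  choice_nonempty : ∀ i ∈ Agt, ∀ w : W, (Choice i w).Nonempty
  choice_cover : ∀ i ∈ Agt, ∀ w : W, ∀ h : Set W,
      IsMaxChain lt h → w ∈ h → ∃ Q ∈ Choice i w, h ∈ Q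
  choice_disjoint : ∀ i ∈ Agt, ∀ w : W, ∀ Q ∈ Choice i w, ∀ Q' ∈ Choice i w,
      (Q ∩ Q').Nonempty → Q = Q'
  superadd : ∀ w : W, ∀ s : ℕ → Set (Set W),
      (∀ i ∈ Agt, s i ∈ Choice i w) → (⋂ i ∈ Agt, s i).Nonempty

/-- Truth of a formula at an index `w/h` of a BT+AC model.  (`[i]φ` holds at
`w/h` iff `φ` holds at `w/h'` for every history `h'` in the cell of
`Choice i w` containing `h`; `□φ` holds at `w/h` iff `φ` holds at `w/h'` for
every history `h'` through `w`; `[i dstit: φ]` additionally requires a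
witness history through `w` where `φ` fails.) -/
def truth {Agt : Set ℕ} (M : BTAC Agt) : Fml → M.W → Set M.W → Prop
  | .atm p, w, h => M.V p w h
  | .neg φ, w, h => ¬ truth M φ w h
  | .and φ ψ, w, h => truth M φ w h ∧ truth M ψ w h
  | .cstit i φ, w, h =>
      ∀ h' : Set M.W, (∃ Q ∈ M.Choice i w, h ∈ Q ∧ h' ∈ Q) → truth M φ w h'
  | .dstit i φ, w, h =>
      (∀ h' : Set M.W, (∃ Q ∈ M.Choice i w, h ∈ Q ∧ h' ∈ Q) → truth M φ w h') ∧
      (∃ h'' : Set M.W, IsMaxChain M.lt h'' ∧ w ∈ h'' ∧ ¬ truth M φ w h'')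
  | .box φ, w, h =>
      ∀ h' : Set M.W, IsMaxChain M.lt h' → w ∈ h' → truth M φ w h'

/-- Validity in BT+AC structures over the agent set `Agt`: truth at every
index `w/h` (with `h` a history and `w ∈ h`) of every BT+AC model. -/
def validBTAC (Agt : Set ℕ) (φ : Fml) : Prop :=
  ∀ M : BTAC Agt, ∀ w : M.W, ∀ h : Set M.W,
    IsMaxChain M.lt h → w ∈ h → truth M φ w h

/-- Satisfiability in BT+AC structures over the agent set `Agt`. -/
def satBTAC (Agt : Set ℕ) (φ : Fml) : Prop :=
  ∃ M : BTAC Agt, ∃ w : M.W, ∃ h : Set M.W,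
    IsMaxChain M.lt h ∧ w ∈ h ∧ truth M φ w h

/-- A Kripke model over the agent set `Agt`: a nonempty set of worlds, an
equivalence relation `R i` for each agent `i ∈ Agt`, and a valuation. -/
structure KModel (Agt : Set ℕ) where
  W : Type
  neW : Nonempty W
  R : ℕ → W → W → Prop
  equiv : ∀ i ∈ Agt, Equivalence (R i)
  V : ℕ → Set W

/-- The general permutation property: for all worlds `w, v` and agents
`l, m, n ∈ Agt`, if `⟨w,v⟩ ∈ R_l ∘ R_m` then there is `u` with `⟨w,u⟩ ∈ R_n`
and `⟨u,v⟩ ∈ R_i` for every agent `i ≠ n`. -/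
def GenPerm {Agt : Set ℕ} (M : KModel Agt) : Prop :=
  ∀ w v : M.W, ∀ l ∈ Agt, ∀ m ∈ Agt, ∀ n ∈ Agt,
    Relation.Comp (M.R l) (M.R m) w v →
    ∃ u : M.W, M.R n w u ∧ ∀ i ∈ Agt, i ≠ n → M.R i u v

/-- Truth in a Kripke model: `[i]` is interpreted by `R i`, and `□` by the
composition `R 1 ∘ R 0` (so that `Def(□)` holds). -/
def ktruth {Agt : Set ℕ} (M : KModel Agt) : Fml → M.W → Prop
  | .atm p, w => w ∈ M.V p
  | .neg φ, w => ¬ ktruth M φ w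
  | .and φ ψ, w => ktruth M φ w ∧ ktruth M ψ w
  | .cstit i φ, w => ∀ u : M.W, M.R i w u → ktruth M φ u
  | .dstit i φ, w =>
      (∀ u : M.W, M.R i w u → ktruth M φ u) ∧
      (∃ u : M.W, Relation.Comp (M.R 1) (M.R 0) w u ∧ ¬ ktruth M φ u)
  | .box φ, w => ∀ u : M.W, Relation.Comp (M.R 1) (M.R 0) w u → ktruth M φ u

/-- Validity in all Kripke models over `Agt` (with equivalence relations)
satisfying the general permutation property. -/
def validK (Agt : Set ℕ) (φ : Fml) : Prop :=
  ∀ M : KModel Agt, GenPerm M → ∀ w : M.W, ktruth M φ w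

/-- Satisfiability in some Kripke model over `Agt` (with equivalence
relations) satisfying the general permutation property. -/
def satK (Agt : Set ℕ) (φ : Fml) : Prop :=
  ∃ M : KModel Agt, GenPerm M ∧ ∃ w : M.W, ktruth M φ w

/-- `φ` is (a substitution instance of) a propositional tautology: it is true
under every assignment of truth values to formulas that respects `¬` and `∧`. -/
def Taut (φ : Fml) : Prop :=
  ∀ v : Fml → Prop,
    (∀ ψ : Fml, v (.neg ψ) ↔ ¬ v ψ) →
    (∀ ψ χ : Fml, v (.and ψ χ) ↔ (v ψ ∧ v χ)) →
    v φ

/-- The S5 axiom schemas (K, T and 5) for a box-like operator `op`. -/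
def s5Set (op : Fml → Fml) : Set Fml :=
  {χ | (∃ φ ψ : Fml, χ = impF (op (impF φ ψ)) (impF (op φ) (op ψ))) ∨
       (∃ φ : Fml, χ = impF (op φ) φ) ∨
       (∃ φ : Fml, χ = impF (.neg (op (.neg φ))) (op (.neg (op (.neg φ)))))}

/-- The schemas `(Incl_i) : □φ → [i]φ` for each agent `i ∈ Agt`. -/
def inclSet (Agt : Set ℕ) : Set Fml :=
  {χ | ∃ i ∈ Agt, ∃ φ : Fml, χ = impF (.box φ) (.cstit i φ)}

/-- The formula `(AAIA_k) : ◇φ → ⟨k⟩⋀_{0 ≤ i < k}⟨i⟩φ`. -/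
def aaiaFml (k : ℕ) (φ : Fml) : Fml :=
  impF (diaF φ) (posF k (conjF ((List.range k).map (fun i => posF i φ))))

/-- The alternative independence schemas `(AAIA_k)` for all `k ≥ 1` with
agents `0, …, k ∈ Agt`. -/
def aaiaSet (Agt : Set ℕ) : Set Fml :=
  {χ | ∃ k : ℕ, 1 ≤ k ∧ (∀ i ≤ k, i ∈ Agt) ∧ ∃ φ : Fml, χ = aaiaFml k φ}

/-- The formula `(AIA_k) : (◇[0]φ₀ ∧ … ∧ ◇[k]φₖ) → ◇([0]φ₀ ∧ … ∧ [k]φₖ)`. -/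
def aiaFml (k : ℕ) (φs : ℕ → Fml) : Fml :=
  impF (conjF ((List.range (k+1)).map (fun i => diaF (.cstit i (φs i)))))
       (diaF (conjF ((List.range (k+1)).map (fun i => .cstit i (φs i)))))

/-- The formula `(GPerm_k) : ⟨l⟩⟨m⟩φ → ⟨n⟩⋀_{i ≤ k, i ≠ n}⟨i⟩φ`. -/
def gpermFml (k l m n : ℕ) (φ : Fml) : Fml :=
  impF (posF l (posF m φ))
       (posF n (conjF (((List.range (k+1)).filter (fun i => i != n)).map
          (fun i => posF i φ))))

/-- The general permutation schemas `(GPerm_k)` for all `k ≥ 0` (with agents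
`0, …, k ∈ Agt`) and agents `l, m, n ∈ Agt`. -/
def gpermSet (Agt : Set ℕ) : Set Fml :=
  {χ | ∃ k : ℕ, (∀ i ≤ k, i ∈ Agt) ∧
       ∃ l ∈ Agt, ∃ m ∈ Agt, ∃ n ∈ Agt, ∃ φ : Fml, χ = gpermFml k l m n φ}

/-- The definition schema `Def(□) : □φ ↔ [1][0]φ`. -/
def defBoxSet : Set Fml :=
  {χ | ∃ φ : Fml, χ = iffF (.box φ) (.cstit 1 (.cstit 0 φ))}

/-- The alternative axiomatics of Section 3: `S5(□)`, `S5(i)` for each agent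
`i ∈ Agt`, `(Incl_i)` and `(AAIA_k)`. -/
def xuAltAx (Agt : Set ℕ) : Set Fml :=
  s5Set Fml.box ∪ (⋃ i ∈ Agt, s5Set (fun φ => Fml.cstit i φ)) ∪
    inclSet Agt ∪ aaiaSet Agt

/-- The axiomatics of Section 4: `S5(i)` for each agent `i ∈ Agt`, `Def(□)`
and `(GPerm_k)`. -/
def gpermAx (Agt : Set ℕ) : Set Fml :=
  (⋃ i ∈ Agt, s5Set (fun φ => Fml.cstit i φ)) ∪ defBoxSet ∪ gpermSet Agt

/-- Hilbert-style provability from the axiom set `Ax` (together with all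
propositional tautologies) by modus ponens and `□`-necessitation. -/
inductive ProvB (Ax : Set Fml) : Fml → Prop
  | taut {φ : Fml} : Taut φ → ProvB Ax φ
  | axm {φ : Fml} : φ ∈ Ax → ProvB Ax φ
  | mp {φ ψ : Fml} : ProvB Ax (impF φ ψ) → ProvB Ax φ → ProvB Ax ψ
  | nec {φ : Fml} : ProvB Ax φ → ProvB Ax (.box φ)

/-- Hilbert-style provability from the axiom set `Ax` (together with all
propositional tautologies) by modus ponens and `[i]`-necessitation for each
agent `i ∈ Agt`. -/
inductive ProvC (Agt : Set ℕ) (Ax : Set Fml) : Fml → Prop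
  | taut {φ : Fml} : Taut φ → ProvC Agt Ax φ
  | axm {φ : Fml} : φ ∈ Ax → ProvC Agt Ax φ
  | mp {φ ψ : Fml} : ProvC Agt Ax (impF φ ψ) → ProvC Agt Ax φ → ProvC Agt Ax ψ
  | nec {i : ℕ} {φ : Fml} : i ∈ Agt → ProvC Agt Ax φ → ProvC Agt Ax (.cstit i φ)

/-- The biimplication `B_ψ` relating the fresh atom `p_ψ` (given by `pA ψ`)
with `ψ`, used in the translation `tr` from `L_DSTIT` to `L_CSTIT`:
`B_{[i dstit: φ]} = (p_{[i dstit: φ]} ↔ [i]p_φ ∧ ¬□p_φ)`. -/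
def Beq (pA : Fml → ℕ) : Fml → Fml
  | .atm q => iffF (.atm (pA (.atm q))) (.atm q)
  | .neg φ => iffF (.atm (pA (.neg φ))) (.neg (.atm (pA φ)))
  | .and φ ψ => iffF (.atm (pA (.and φ ψ))) (.and (.atm (pA φ)) (.atm (pA ψ)))
  | .cstit i φ => iffF (.atm (pA (.cstit i φ))) (.cstit i (.atm (pA φ)))
  | .dstit i φ => iffF (.atm (pA (.dstit i φ)))
      (.and (.cstit i (.atm (pA φ))) (.neg (.box (.atm (pA φ)))))
  | .box φ => iffF (.atm (pA (.box φ))) (.box (.atm (pA φ)))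

/-- The biimplication `B'_ψ` used in the translation `tr'` from `L_CSTIT` to
`L_DSTIT`: `B'_{[i]φ} = (p_{[i]φ} ↔ [i dstit: p_φ] ∨ □p_φ)`. -/
def Beq' (pA : Fml → ℕ) : Fml → Fml
  | .atm q => iffF (.atm (pA (.atm q))) (.atm q)
  | .neg φ => iffF (.atm (pA (.neg φ))) (.neg (.atm (pA φ)))
  | .and φ ψ => iffF (.atm (pA (.and φ ψ))) (.and (.atm (pA φ)) (.atm (pA ψ)))
  | .cstit i φ => iffF (.atm (pA (.cstit i φ)))
      (orF (.dstit i (.atm (pA φ))) (.box (.atm (pA φ))))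
  | .dstit i φ => iffF (.atm (pA (.dstit i φ))) (.dstit i (.atm (pA φ)))
  | .box φ => iffF (.atm (pA (.box φ))) (.box (.atm (pA φ)))

/-- The translation `tr(φ₀) = p_{φ₀} ∧ ⋀_{ψ ∈ sf(φ₀)} □B_ψ`. -/
noncomputable def tr (pA : Fml → ℕ) (φ0 : Fml) : Fml :=
  .and (.atm (pA φ0)) (conjF ((sf φ0).toList.map (fun ψ => .box (Beq pA ψ))))

/-- The translation `tr'(φ₀) = p_{φ₀} ∧ ⋀_{ψ ∈ sf(φ₀)} □B'_ψ`. -/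
noncomputable def tr' (pA : Fml → ℕ) (φ0 : Fml) : Fml :=
  .and (.atm (pA φ0)) (conjF ((sf φ0).toList.map (fun ψ => .box (Beq' pA ψ))))

/-- The atoms `p_ψ = pA ψ` for `ψ ∈ sf φ₀` are pairwise distinct and fresh
(none occurs in `φ₀`). -/
def Fresh (pA : Fml → ℕ) (φ0 : Fml) : Prop :=
  Set.InjOn pA ↑(sf φ0) ∧ ∀ ψ ∈ sf φ0, pA ψ ∉ atoms φ0

/-! The antecedent `⟨l⟩⟨m⟩φ` only yields a history `h''` through `w` at which `φ` holds.
By the independence of agents, the `n`-cell of `h` meets the `i`-cells of `h''` for all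
`i ≠ n` at once; any history `h⋆` in that intersection is `n`-equivalent to `h` and
`i`-equivalent to `h''` for every `i ≠ n`, so it witnesses `⟨n⟩⋀_{i ≠ n}⟨i⟩φ`. -/

namespace BTAC

variable {Agt : Set ℕ} (M : BTAC Agt)

/-- `h'` lies in the cell `Choice_i^w(h)` of agent `i`'s choice at `w` containing `h`. -/
def SameCell (i : ℕ) (w : M.W) (h h' : Set M.W) : Prop :=
  ∃ Q ∈ M.Choice i w, h ∈ Q ∧ h' ∈ Q

variable {M}

lemma SameCell.isMaxChain_right {i : ℕ} (hi : i ∈ Agt) {w : M.W} {h h' : Set M.W}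
    (hhh' : M.SameCell i w h h') : IsMaxChain M.lt h' ∧ w ∈ h' := by
  obtain ⟨Q, hQ, -, hh'Q⟩ := hhh'
  exact M.choice_hist i hi w Q hQ h' hh'Q

lemma exists_sameCell_sameCell_of_ne {n : ℕ} (hn : n ∈ Agt) {w : M.W} {h h'' : Set M.W}
    (hh : IsMaxChain M.lt h) (hwh : w ∈ h) (hh'' : IsMaxChain M.lt h'') (hwh'' : w ∈ h'') :
    ∃ hstar, M.SameCell n w h hstar ∧ ∀ i ∈ Agt, i ≠ n → M.SameCell i w hstar h'' := by
  choose! cell hcell hmem using M.choice_cover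
  let s : ℕ → Set (Set M.W) := fun i => if i = n then cell n w h else cell i w h''
  have hs : ∀ i ∈ Agt, s i ∈ M.Choice i w := by
    intro i hi
    by_cases hin : i = n
    · subst hin; simpa [s] using hcell i hi w h hh hwh
    · simpa [s, hin] using hcell i hi w h'' hh'' hwh''
  obtain ⟨hstar, hstar_mem⟩ := M.superadd w s hs
  simp only [Set.mem_iInter] at hstar_mem
  refine ⟨hstar, ⟨s n, hs n hn, by simpa [s] using hmem n hn w h hh hwh, hstar_mem n hn⟩, ?_⟩
  intro i hi hin
  exact ⟨s i, hs i hi, hstar_mem i hi, by simpa [s, hin] using hmem i hi w h'' hh'' hwh''⟩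

end BTAC

section Truth

variable {Agt : Set ℕ} (M : BTAC Agt) (w : M.W) (h : Set M.W)

lemma truth_impF (φ ψ : Fml) : truth M (impF φ ψ) w h ↔ (truth M φ w h → truth M ψ w h) := by
  simp only [impF, truth, not_and, not_not]

lemma truth_posF (i : ℕ) (φ : Fml) :
    truth M (posF i φ) w h ↔ ∃ h', M.SameCell i w h h' ∧ truth M φ w h' := by
  simp only [posF, truth, not_forall, not_not, exists_prop, BTAC.SameCell]

lemma truth_conjF (L : List Fml) : truth M (conjF L) w h ↔ ∀ ψ ∈ L, truth M ψ w h := by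
  induction L with
  | nil => simp [conjF, impF, truth]
  | cons φ L ih =>
    cases L with
    | nil => simp [conjF]
    | cons ψ L => simp only [conjF, truth, ih, List.forall_mem_cons]

end Truth

theorem gperm_valid_general (Agt : Set ℕ)
    (k : ℕ) (hkAgt : ∀ i ≤ k, i ∈ Agt)
    (l m n : ℕ) (hm : m ∈ Agt) (hn : n ∈ Agt)
    (φ : Fml) :
    validBTAC Agt (gpermFml k l m n φ) := by
  intro M w h hh hwh
  rw [gpermFml, truth_impF]
  intro hlm
  obtain ⟨h', -, hφ'⟩ := (truth_posF ..).1 hlm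
  obtain ⟨h'', hcell'', hφ''⟩ := (truth_posF ..).1 hφ'
  obtain ⟨hh'', hwh''⟩ := hcell''.isMaxChain_right hm
  obtain ⟨hstar, hcell_n, hcell_i⟩ :=
    BTAC.exists_sameCell_sameCell_of_ne hn hh hwh hh'' hwh''
  refine (truth_posF ..).2 ⟨hstar, hcell_n, (truth_conjF ..).2 ?_⟩
  simp only [List.mem_map, List.mem_filter, List.mem_range, bne_iff_ne]
  rintro _ ⟨i, ⟨hik, hin⟩, rfl⟩
  exact (truth_posF ..).2 ⟨h'', hcell_i i (hkAgt i (Nat.lt_succ_iff.mp hik)) hin, hφ''⟩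

/-- For every `k ≥ 0` and all agents `l, m, n ∈ Agt`, the
general permutation schema `(GPerm_k)`, namely
`⟨l⟩⟨m⟩φ → ⟨n⟩⋀_{i ≤ k, i ≠ n}⟨i⟩φ`, is valid in BT+AC structures. -/
theorem gperm_valid (Agt : Set ℕ) (hAgt : InitSeg Agt)
    (k : ℕ) (hkAgt : ∀ i ≤ k, i ∈ Agt)
    (l m n : ℕ) (hl : l ∈ Agt) (hm : m ∈ Agt) (hn : n ∈ Agt)
    (φ : Fml) (hφ : NoDstit φ) (hφA : AgentsIn Agt φ) :
    validBTAC Agt (gpermFml k l m n φ) :=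
  gperm_valid_general Agt k hkAgt l m n hm hn φ

end STIT
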